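/- Let m be a positive integer such that 4m² − 1 is square-free, and let α be a root of f = mx² + x + m. Then f is irreducible over ℚ, K = ℚ(α) is an imaginary quadratic field with discriminant D = 1 − 4m², and H(α)/√|D| = m/√(4m² − 1). In particular H(α)/√|D|tends to 1/2 as m → ∞. -/

import Mathlib

open NumberField IntermediateField Polynomial Filter

/-!
Both `m X² + X + m` and `X² + X + m²` have negative discriminant, so they have no rational
root. The element `β = m α` is a root of the second, generates `K`, and the trace form on `1, β`
gives `disc(1, β) = 1 - 4m²`. Writing `1, β` in an integral basis of `𝓞 K` through an integer
matrix `P` gives `disc(1, β) = det(P)² · disc K`; since `1 - 4m²` is squarefree, `det P = ±1`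
and `disc K = 1 - 4m²`.
-/

theorem Polynomial.natDegree_X_sq_add_X_add_C {R : Type*} [Semiring R] [Nontrivial R] (r : R) :
    (X ^ 2 + X + C r).natDegree = 2 := by
  compute_degree!

theorem Polynomial.irreducible_of_discrim_neg {F : Type*} [Field F] [LinearOrder F]
    [IsStrictOrderedRing F] {a b c : F} (ha : a ≠ 0) (h : discrim a b c < 0) :
    Irreducible (C a * X ^ 2 + C b * X + C c) := by
  have hdeg : (C a * X ^ 2 + C b * X + C c).natDegree = 2 := by compute_degree!
  rw [irreducible_iff_roots_eq_zero_of_degree_le_three (by omega) (by omega),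
    Multiset.eq_zero_iff_forall_notMem]
  intro x hx
  have hroot : a * (x * x) + b * x + c = 0 := by
    simpa [sq] using (mem_roots (ne_zero_of_natDegree_gt (n := 0) (by omega))).mp hx
  nlinarith [discrim_eq_sq_of_quadratic_eq_zero hroot, sq_nonneg (2 * a * x + b)]

theorem IntermediateField.adjoin_simple_smul {F E : Type*} [Field F] [Field E] [Algebra F E]
    {r : F} (hr : r ≠ 0) (x : E) : F⟮r • x⟯ = F⟮x⟯ := by
  apply le_antisymm <;> rw [adjoin_simple_le_iff]
  · exact smul_mem _ (mem_adjoin_simple_self F x)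
  · have h : r⁻¹ • r • x ∈ F⟮r • x⟯ := smul_mem _ (mem_adjoin_simple_self F _)
    rwa [inv_smul_smul₀ hr] at h

theorem NumberField.discr_eq_of_squarefree {ι K : Type*} [Fintype ι] [DecidableEq ι] [Field K]
    [NumberField K] (b : Module.Basis ι ℚ K) (hb : ∀ i, IsIntegral ℤ (b i)) {d : ℤ}
    (hd : Algebra.discr ℚ b = d) (hsf : Squarefree d) : discr K = d := by
  set B := (integralBasis K).reindex ((integralBasis K).indexEquiv b)
  have hint : ∀ i j, IsIntegral ℤ (B.toMatrix b i j) := by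
    intro i j
    obtain ⟨x, hx⟩ : ∃ x : 𝓞 K, algebraMap (𝓞 K) K x = b j := ⟨⟨b j, hb j⟩, rfl⟩
    rw [Module.Basis.toMatrix_apply, Module.Basis.repr_reindex_apply, ← hx,
      integralBasis_repr_apply]
    exact isIntegral_algebraMap
  obtain ⟨r, hr⟩ := IsIntegrallyClosed.isIntegral_iff.mp (IsIntegral.det hint)
  have hdr : d = r ^ 2 * discr K := by
    have h := Algebra.discr_of_matrix_vecMul B (B.toMatrix b)
    rw [B.toMatrix_map_vecMul, hd, Module.Basis.coe_reindex, Algebra.discr_reindex, ← coe_discr,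
      ← hr, algebraMap_int_eq, eq_intCast] at h
    exact_mod_cast h
  have hr1 : r ^ 2 = 1 := Int.isUnit_sq (hsf r ⟨discr K, by rw [hdr]; ring⟩)
  rw [hdr, hr1, one_mul]

section QuadraticGenerator

variable {K : Type*} [Field K] {c : ℤ} {β : K}

theorem isIntegral_int_of_sq_add_self_add_intCast_eq_zero (hβ : β ^ 2 + β + c = 0) :
    IsIntegral ℤ β := by
  refine ⟨X ^ 2 + X + C c, by monicity!, ?_⟩
  rw [eval₂_add, eval₂_add, eval₂_X_pow, eval₂_X, eval₂_C, eq_intCast]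
  exact hβ

theorem minpoly_eq_X_sq_add_X_add_C [CharZero K] (hβ : β ^ 2 + β + c = 0)
    (hirr : Irreducible (X ^ 2 + X + C (c : ℚ))) : minpoly ℚ β = X ^ 2 + X + C (c : ℚ) :=
  (minpoly.eq_of_irreducible_of_monic hirr (by simp [hβ]) (by monicity!)).symm

theorem finrank_eq_two_of_adjoin_eq_top [CharZero K] (hβ : β ^ 2 + β + c = 0)
    (hirr : Irreducible (X ^ 2 + X + C (c : ℚ))) (hgen : ℚ⟮β⟯ = ⊤) :
    Module.finrank ℚ K = 2 := by
  rw [← finrank_top', ← hgen,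
    adjoin.finrank (isIntegral_int_of_sq_add_self_add_intCast_eq_zero hβ).tower_top,
    minpoly_eq_X_sq_add_X_add_C hβ hirr, natDegree_X_sq_add_X_add_C]

variable [NumberField K]

theorem trace_eq_neg_one_of_adjoin_eq_top (hβ : β ^ 2 + β + c = 0)
    (hirr : Irreducible (X ^ 2 + X + C (c : ℚ))) (hgen : ℚ⟮β⟯ = ⊤) :
    Algebra.trace ℚ K β = -1 := by
  rw [trace_eq_finrank_mul_minpoly_nextCoeff, finrank_eq_one_iff_eq_top.mpr hgen,
    minpoly_eq_X_sq_add_X_add_C hβ hirr,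
    nextCoeff_of_natDegree_pos (by rw [natDegree_X_sq_add_X_add_C]; norm_num),
    natDegree_X_sq_add_X_add_C]
  simp only [coeff_add, coeff_X_pow, coeff_X, coeff_C]
  norm_num

theorem discr_one_pair_eq_one_sub_four_mul (hβ : β ^ 2 + β + c = 0)
    (hirr : Irreducible (X ^ 2 + X + C (c : ℚ))) (hgen : ℚ⟮β⟯ = ⊤) :
    Algebra.discr ℚ ![1, β] = ((1 - 4 * c : ℤ) : ℚ) := by
  have hfin := finrank_eq_two_of_adjoin_eq_top hβ hirr hgen
  have htr_one : Algebra.trace ℚ K 1 = 2 := by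
    rw [← map_one (algebraMap ℚ K), Algebra.trace_algebraMap, hfin]
    norm_num
  have htr := trace_eq_neg_one_of_adjoin_eq_top hβ hirr hgen
  have htr_sq : Algebra.trace ℚ K (β * β) = 1 - 2 * c := by
    have hsq : β * β = -β - algebraMap ℚ K c := by rw [map_intCast]; linear_combination hβ
    rw [hsq, map_sub, map_neg, Algebra.trace_algebraMap, htr, hfin, nsmul_eq_mul]
    ring
  rw [Algebra.discr_def, Matrix.det_fin_two]
  simp [Algebra.traceMatrix_apply, Algebra.traceForm_apply, htr_one, htr, htr_sq]
  ring

theorem NumberField.discr_eq_one_sub_four_mul (hβ : β ^ 2 + β + c = 0)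
    (hirr : Irreducible (X ^ 2 + X + C (c : ℚ))) (hgen : ℚ⟮β⟯ = ⊤)
    (hsf : Squarefree (1 - 4 * c)) : discr K = 1 - 4 * c := by
  have hindep : LinearIndependent ℚ ![1, β] := by
    rw [LinearIndependent.pair_iff' one_ne_zero]
    intro r hr
    have h := minpoly_eq_X_sq_add_X_add_C hβ hirr
    rw [← hr, Algebra.smul_def, mul_one, minpoly.eq_X_sub_C] at h
    have := congrArg natDegree h
    rw [natDegree_X_sub_C, natDegree_X_sq_add_X_add_C] at this
    omega
  let b := basisOfLinearIndependentOfCardEqFinrank hindep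
    (by rw [finrank_eq_two_of_adjoin_eq_top hβ hirr hgen, Fintype.card_fin])
  have hb : ⇑b = ![1, β] := coe_basisOfLinearIndependentOfCardEqFinrank _ _
  refine discr_eq_of_squarefree b (fun i => ?_)
    (by rw [hb, discr_one_pair_eq_one_sub_four_mul hβ hirr hgen]) hsf
  rw [hb]
  fin_cases i
  · exact isIntegral_one
  · exact isIntegral_int_of_sq_add_self_add_intCast_eq_zero hβ

end QuadraticGenerator

theorem tendsto_div_sqrt_four_mul_sq_sub_one :
    Tendsto (fun x : ℝ => x / √(4 * x ^ 2 - 1)) atTop (nhds (1 / 2)) := by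
  have hc : ContinuousAt (fun t : ℝ => (√(4 - t ^ 2))⁻¹) 0 := by fun_prop (disch := norm_num)
  have hlim := hc.tendsto.comp tendsto_inv_atTop_zero
  rw [show (√(4 - (0:ℝ) ^ 2))⁻¹ = 1 / 2 by
    rw [show (4:ℝ) - 0 ^ 2 = 2 ^ 2 by norm_num, Real.sqrt_sq (by norm_num), one_div]] at hlim
  refine hlim.congr' ?_
  filter_upwards [eventually_gt_atTop 0] with x hx
  rw [Function.comp_apply, show 4 * x ^ 2 - 1 = x ^ 2 * (4 - x⁻¹ ^ 2) by field_simp,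
    Real.sqrt_mul (sq_nonneg x), Real.sqrt_sq hx.le, div_mul_eq_div_div, div_self hx.ne',
    one_div]

theorem small_generators_imaginary_quadratic_example
    (m : ℤ) (hm : 0 < m) (hsf : Squarefree (4 * m ^ 2 - 1))
    (K : Type*) [Field K] [NumberField K]
    (α : K) (hroot : (m : K) * α ^ 2 + α + (m : K) = 0)
    (hgen : ℚ⟮α⟯ = ⊤) :
    Irreducible (Polynomial.C (m : ℚ) * Polynomial.X ^ 2 + Polynomial.X +
        Polynomial.C (m : ℚ)) ∧
    Module.finrank ℚ K = 2 ∧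
    NumberField.discr K = 1 - 4 * m ^ 2 ∧ NumberField.discr K < 0 ∧
    ((max |m| (max |1| |m|) : ℤ) : ℝ) / Real.sqrt |(NumberField.discr K : ℝ)| =
      (m : ℝ) / Real.sqrt (4 * (m : ℝ) ^ 2 - 1) ∧
    Tendsto (fun k : ℕ => (k : ℝ) / Real.sqrt (4 * (k : ℝ) ^ 2 - 1)) atTop (nhds (1 / 2)) := by
  have hm1 : (1 : ℚ) ≤ m := by exact_mod_cast hm
  set β : K := (m : ℚ) • α
  have hβ : β ^ 2 + β + ((m ^ 2 : ℤ) : K) = 0 := by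
    simp only [β, Rat.smul_def, Rat.cast_intCast]
    push_cast
    linear_combination (m : K) * hroot
  have hβgen : ℚ⟮β⟯ = ⊤ := by rw [adjoin_simple_smul (by exact_mod_cast hm.ne'), hgen]
  have hirr : Irreducible (X ^ 2 + X + C ((m ^ 2 : ℤ) : ℚ)) := by
    simpa using irreducible_of_discrim_neg (b := 1) one_ne_zero
      (by rw [discrim]; push_cast; nlinarith : discrim 1 1 ((m ^ 2 : ℤ) : ℚ) < 0)
  have hsf' : Squarefree (1 - 4 * m ^ 2) := by
    rw [show 1 - 4 * m ^ 2 = -(4 * m ^ 2 - 1) by ring]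
    exact (Associated.neg_left (Associated.refl _)).squarefree_iff.mpr hsf
  have hdisc : discr K = 1 - 4 * m ^ 2 :=
    NumberField.discr_eq_one_sub_four_mul hβ hirr hβgen hsf'
  have hdisc_neg : discr K < 0 := by rw [hdisc]; nlinarith
  refine ⟨?_, finrank_eq_two_of_adjoin_eq_top hβ hirr hβgen, hdisc, hdisc_neg, ?_,
    tendsto_div_sqrt_four_mul_sq_sub_one.comp tendsto_natCast_atTop_atTop⟩
  · simpa using irreducible_of_discrim_neg (b := 1) (by exact_mod_cast hm.ne')
      (by rw [discrim]; nlinarith : discrim (m : ℚ) 1 m < 0)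
  · rw [abs_one, abs_of_pos hm, max_eq_left (by omega),
      abs_of_neg (by exact_mod_cast hdisc_neg), hdisc]
    push_cast
    ring_nf
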